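/- arXiv:0811.1236 — 5 statements merged into one kernel-verified Lean document; each statement's English description precedes it below -/
import Mathlib

section
/- The point (1,0,0,0) is at squared distance 1 from exactly 8 points of the D4 lattice, and no point of D4 is strictly closer to it. -/
/-- The deep hole (1,0,0,0) of the D4 lattice. -/
def hole1 : Fin 4 → ℚ := fun i => if i = 0 then 1 else 0

/-! Put `w = v - (1,0,0,0)`. The squared distance from `v` to the hole is the integer `∑ wᵢ²`,
and `v ∈ D4` exactly when `∑ wᵢ` is odd. As `x² ≡ x (mod 2)`, the parities of `∑ wᵢ²` and
`∑ wᵢ` agree, so the squared distance from a point of `D4` is odd, hence at least 1; conversely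
`∑ wᵢ² = 1` already forces `v ∈ D4`, so the nearest lattice points are the translates of the
`2 · 4` vectors `±eᵢ` of `ℤ⁴`. -/

namespace Int

variable {ι : Type*}

theorem injective_single_units [DecidableEq ι] :
    Function.Injective fun p : ι × ℤˣ => (Pi.single p.1 (p.2 : ℤ) : ι → ℤ) := by
  rintro ⟨i, u⟩ ⟨j, v⟩ h
  have hij : i = j := by
    by_contra hij
    simpa [Pi.single_apply, hij] using congrFun h i
  subst hij
  simpa using Units.ext (Pi.single_injective i h)

variable [Fintype ι]

theorem odd_sum_sq_iff (w : ι → ℤ) : Odd (∑ i, w i ^ 2) ↔ Odd (∑ i, w i) := by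
  have hdiff : Even (∑ i, w i ^ 2 - ∑ i, w i) := by
    rw [← Finset.sum_sub_distrib]
    refine Finset.even_sum _ fun i _ => ?_
    simpa [sq, mul_sub] using Int.even_mul_pred_self (w i)
  simpa only [← Int.not_even_iff_odd] using not_congr (Int.even_sub.mp hdiff)

theorem one_le_sum_sq_of_odd_sum (w : ι → ℤ) (h : Odd (∑ i, w i)) : 1 ≤ ∑ i, w i ^ 2 := by
  obtain ⟨k, hk⟩ := (odd_sum_sq_iff w).mpr h
  have : 0 ≤ ∑ i, w i ^ 2 := Finset.sum_nonneg fun i _ => sq_nonneg (w i)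
  omega

variable [DecidableEq ι]

theorem sum_sq_eq_one_iff (w : ι → ℤ) :
    ∑ i, w i ^ 2 = 1 ↔ ∃ (i : ι) (u : ℤˣ), Pi.single i (u : ℤ) = w := by
  constructor
  · intro h
    obtain ⟨i, hi⟩ : ∃ i, w i ≠ 0 := by
      by_contra! h0
      simp [h0] at h
    have hsplit := Finset.add_sum_erase Finset.univ (fun j => w j ^ 2) (Finset.mem_univ i)
    have hpos : 0 < w i ^ 2 := by positivity
    have hrest : 0 ≤ ∑ j ∈ Finset.univ.erase i, w j ^ 2 :=
      Finset.sum_nonneg fun j _ => sq_nonneg (w j)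
    have hrest0 : ∑ j ∈ Finset.univ.erase i, w j ^ 2 = 0 := by omega
    have hunit : IsUnit (w i) := IsUnit.of_pow_eq_one (n := 2) (by omega) two_ne_zero
    refine ⟨i, hunit.unit, funext fun j => ?_⟩
    rcases eq_or_ne j i with rfl | hj
    · simp
    · have := (Finset.sum_eq_zero_iff_of_nonneg fun j _ => sq_nonneg (w j)).mp hrest0 j
        (Finset.mem_erase.mpr ⟨hj, Finset.mem_univ j⟩)
      rw [Pi.single_eq_of_ne hj]
      exact ((pow_eq_zero_iff two_ne_zero).mp this).symm
  · rintro ⟨i, u, rfl⟩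
    rcases Int.units_eq_one_or u with rfl | rfl <;> simp [Pi.single_apply]

theorem ncard_sum_sq_eq_one : {w : ι → ℤ | ∑ i, w i ^ 2 = 1}.ncard = 2 * Fintype.card ι := by
  have hrange : {w : ι → ℤ | ∑ i, w i ^ 2 = 1}
      = Set.range fun p : ι × ℤˣ => (Pi.single p.1 (p.2 : ℤ) : ι → ℤ) := by
    ext w
    simpa using sum_sq_eq_one_iff w
  rw [hrange, Set.ncard_range_of_injective injective_single_units]
  simp [mul_comm]

end Int

theorem hole1_eq_cast_single : hole1 = fun i => ((Pi.single 0 1 : Fin 4 → ℤ) i : ℚ) := by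
  funext i
  by_cases hi : i = 0 <;> simp [hole1, hi]

theorem sum_sq_sub_hole1 (v : Fin 4 → ℤ) :
    ∑ i, ((v i : ℚ) - hole1 i) ^ 2
      = ((∑ i, (v - (Pi.single 0 1 : Fin 4 → ℤ)) i ^ 2 : ℤ) : ℚ) := by
  simp [hole1_eq_cast_single]

theorem even_sum_iff_odd_sum_sub_single (v : Fin 4 → ℤ) :
    Even (∑ i, v i) ↔ Odd (∑ i, (v - (Pi.single 0 1 : Fin 4 → ℤ)) i) := by
  simp [Finset.sum_sub_distrib]

theorem d4_sphere_hole1_eq_image :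
    {v : Fin 4 → ℤ | Even (∑ i, v i) ∧ ∑ i, ((v i : ℚ) - hole1 i) ^ 2 = 1}
      = (· + Pi.single 0 1) '' {w : Fin 4 → ℤ | ∑ i, w i ^ 2 = 1} := by
  ext v
  simp only [Set.image_add_right, Set.mem_preimage, Set.mem_ofPred_eq, sum_sq_sub_hole1,
    even_sum_iff_odd_sum_sub_single, ← sub_eq_add_neg]
  rw [← Int.odd_sum_sq_iff, Int.cast_eq_one]
  exact and_iff_right_of_imp fun h => by rw [h]; exact odd_one

/-- The point (1,0,0,0) is at squared distance 1 from exactly 8 points of the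
D4 lattice, and no point of D4 is strictly closer to it. -/
theorem d4_deep_hole_one :
    {v : Fin 4 → ℤ | Even (∑ i, v i) ∧ ∑ i, ((v i : ℚ) - hole1 i) ^ 2 = 1}.ncard = 8 ∧
    ∀ v : Fin 4 → ℤ, Even (∑ i, v i) → 1 ≤ ∑ i, ((v i : ℚ) - hole1 i) ^ 2 := by
  constructor
  · rw [d4_sphere_hole1_eq_image, Set.ncard_image_of_injective _ (add_left_injective _),
      Int.ncard_sum_sq_eq_one]
    rfl
  · intro v hv
    rw [sum_sq_sub_hole1]
    exact_mod_cast Int.one_le_sum_sq_of_odd_sum _ ((even_sum_iff_odd_sum_sub_single v).mp hv)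
end

section
/- The point (1/2,1/2,1/2,1/2) is at squared distance 1 from exactly 8 points of the D4 lattice, and at squared distance 3 from exactly 32 points of D4, with no points of D4 at any squared distance strictly between 1 and 3. -/
/-- The deep hole (1/2,1/2,1/2,1/2) of the D4 lattice. -/
def hole2 : Fin 4 → ℚ := fun _ => 1/2

/-!
Doubling the coordinates, `4 |v - h|² = ∑ (2vᵢ - 1)²` is a sum of four odd squares, each
`≡ 1 (mod 8)`; so `4 |v - h|² ≡ 4 (mod 8)` and `|v - h|²` is an odd integer, which already rules
out every value strictly between 1 and 3. The two shells are finite: a term `(2vᵢ - 1)² ≤ 12`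
forces `vᵢ ∈ [-1, 2]`, so they are counted by evaluation inside the box `[-1, 2]⁴`.
-/

open Finset

theorem Int.two_mul_sub_one_sq_modEq_one (a : ℤ) : (2 * a - 1) ^ 2 ≡ 1 [ZMOD 8] := by
  obtain ⟨k, hk⟩ := Int.even_mul_pred_self a
  refine Int.modEq_iff_dvd.mpr ⟨-k, ?_⟩
  linear_combination (-4) * hk

theorem sum_two_mul_sub_one_sq_modEq_card {ι : Type*} [Fintype ι] (v : ι → ℤ) :
    ∑ i, (2 * v i - 1) ^ 2 ≡ Fintype.card ι [ZMOD 8] := by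
  simpa using Int.ModEq.sum (s := univ) fun i _ => Int.two_mul_sub_one_sq_modEq_one (v i)

theorem sum_sub_half_sq {ι : Type*} [Fintype ι] (v : ι → ℤ) :
    ∑ i, ((v i : ℚ) - 1 / 2) ^ 2 = ((∑ i, (2 * v i - 1) ^ 2 : ℤ) : ℚ) / 4 := by
  push_cast
  rw [sum_div]
  exact sum_congr rfl fun i _ => by ring

theorem sum_sub_hole2_sq (v : Fin 4 → ℤ) :
    ∑ i, ((v i : ℚ) - hole2 i) ^ 2 = ((∑ i, (2 * v i - 1) ^ 2 : ℤ) : ℚ) / 4 :=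
  sum_sub_half_sq v

theorem sum_sub_hole2_sq_eq_intCast_iff (v : Fin 4 → ℤ) (n : ℤ) :
    ∑ i, ((v i : ℚ) - hole2 i) ^ 2 = n ↔ ∑ i, (2 * v i - 1) ^ 2 = 4 * n := by
  rw [sum_sub_hole2_sq, div_eq_iff four_ne_zero, mul_comm]
  exact_mod_cast Iff.rfl

theorem mem_Icc_of_sum_two_mul_sub_one_sq_le_twelve {ι : Type*} [Fintype ι] {v : ι → ℤ}
    (h : ∑ i, (2 * v i - 1) ^ 2 ≤ 12) (i : ι) : v i ∈ Icc (-1) 2 := by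
  have hi : (2 * v i - 1) ^ 2 ≤ 12 :=
    (single_le_sum (fun j _ => sq_nonneg (2 * v j - 1)) (mem_univ i)).trans h
  rw [mem_Icc]
  constructor <;> nlinarith

theorem setOf_even_sum_sub_hole2_sq_eq (n : ℤ) (hn : n ≤ 3) :
    {v : Fin 4 → ℤ | Even (∑ i, v i) ∧ ∑ i, ((v i : ℚ) - hole2 i) ^ 2 = n} =
      ↑((Fintype.piFinset fun _ : Fin 4 => Icc (-1 : ℤ) 2).filter
        fun v => Even (∑ i, v i) ∧ ∑ i, (2 * v i - 1) ^ 2 = 4 * n) := by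
  ext v
  simp only [sum_sub_hole2_sq_eq_intCast_iff, Set.mem_ofPred_eq, coe_filter,
    Fintype.mem_piFinset]
  exact ⟨fun ⟨he, hs⟩ => ⟨mem_Icc_of_sum_two_mul_sub_one_sq_le_twelve (by omega), he, hs⟩,
    fun ⟨_, h⟩ => h⟩

/-- The point (1/2,1/2,1/2,1/2) is at squared distance 1 from exactly 8 points of
the D4 lattice, at squared distance 3 from exactly 32 points of D4, and no point
of D4 lies at squared distance strictly between 1 and 3 from it. -/
theorem d4_deep_hole_half :
    {v : Fin 4 → ℤ | Even (∑ i, v i) ∧ ∑ i, ((v i : ℚ) - hole2 i) ^ 2 = 1}.ncard = 8 ∧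
    {v : Fin 4 → ℤ | Even (∑ i, v i) ∧ ∑ i, ((v i : ℚ) - hole2 i) ^ 2 = 3}.ncard = 32 ∧
    ∀ v : Fin 4 → ℤ, Even (∑ i, v i) →
      ¬ (1 < ∑ i, ((v i : ℚ) - hole2 i) ^ 2 ∧ ∑ i, ((v i : ℚ) - hole2 i) ^ 2 < 3) := by
  refine ⟨?_, ?_, fun v _ ⟨h1, h3⟩ => ?_⟩
  · rw [← Int.cast_one, setOf_even_sum_sub_hole2_sq_eq 1 (by norm_num), Set.ncard_coe_finset]
    decide
  · rw [show (3 : ℚ) = (3 : ℤ) by norm_num, setOf_even_sum_sub_hole2_sq_eq 3 le_rfl,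
      Set.ncard_coe_finset]
    decide
  · have hS := sum_two_mul_sub_one_sq_modEq_card v
    rw [sum_sub_hole2_sq] at h1 h3
    generalize ∑ i, (2 * v i - 1) ^ 2 = S at h1 h3 hS
    have h4 : 4 < S := by exact_mod_cast (by linarith : (4 : ℚ) < S)
    have h12 : S < 12 := by exact_mod_cast (by linarith : (S : ℚ) < 12)
    simp only [Fintype.card_fin, Int.ModEq] at hS
    omega
end

section
/- Let c: Z → {1,2,3,4} be a coloring with c(n) ≠ c(n+1) for all n, and suppose that for every n, c(n) ∉ {c(n+2), c(n-2), c(n+3), c(n-3)}. Then c is periodic of period 4 and uses each of the four colors exactly once in each period; i.e., up to a permutation of the colors, c(n) ≡ n (mod 4). -/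
/-!
If `c` takes `k = |α|` distinct values on every window of `k` consecutive integers, then the
window `n, …, n + k - 1` exhausts the colors, and `c (n + k)` differs from `c (n + 1), …,
c (n + k - 1)`, so it must equal `c n`. Hence `c` is `k`-periodic, and on one period it is a
bijection `ZMod k ≃ α`. For `k = 4` the hypotheses say exactly that `c` separates integers at
distance `1`, `2` or `3`.
-/

def WindowInjective {α : Type*} (k : ℕ) (c : ℤ → α) : Prop :=
  ∀ ⦃m n : ℤ⦄, m < n → n < m + k → c m ≠ c n

namespace WindowInjective

variable {α : Type*} {k : ℕ} {c : ℤ → α}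

theorem eq_of_eq (hc : WindowInjective k c) {m n : ℤ} (h : c m = c n)
    (hmn : m - n < k) (hnm : n - m < k) : m = n := by
  rcases lt_trichotomy m n with hlt | heq | hgt
  · exact absurd h (hc hlt (by omega))
  · exact heq
  · exact absurd h.symm (hc hgt (by omega))

theorem periodic [Fintype α] (hk : Fintype.card α = k) (hc : WindowInjective k c) :
    Function.Periodic c k := by
  intro n
  let window : Fin k → α := fun i => c (n + i)
  have hinj : Function.Injective window := fun i j hij =>
    Fin.ext (by have := hc.eq_of_eq hij (by omega) (by omega); omega)
  obtain ⟨i, hi⟩ := ((Fintype.bijective_iff_injective_and_card window).mpr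
    ⟨hinj, by simp [hk]⟩).2 (c (n + k))
  have hi0 : (i : ℤ) = 0 := by
    by_contra hne
    have := hc.eq_of_eq hi (by omega) (by omega)
    omega
  simpa [window, hi0] using hi.symm

theorem exists_equiv_zmod [Fintype α] (hk : Fintype.card α = k) (hc : WindowInjective k c) :
    ∃ σ : ZMod k ≃ α, ∀ n : ℤ, c n = σ n := by
  have : NeZero k := ⟨hk ▸ @Fintype.card_ne_zero α _ ⟨c 0⟩⟩
  let σ : ZMod k → α := fun x => c x.val
  have hσ : Function.Injective σ := fun x y hxy => ZMod.val_injective k <| by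
    have := hc.eq_of_eq hxy (by have := x.val_lt; omega) (by have := y.val_lt; omega)
    omega
  refine ⟨Equiv.ofBijective σ ((Fintype.bijective_iff_injective_and_card σ).mpr
    ⟨hσ, by simp [hk]⟩), fun n => ?_⟩
  have hmod : ((n : ZMod k).val : ℤ) = n - (n / k) * k := by
    rw [ZMod.val_intCast, Int.emod_def, mul_comm]
  simp only [Equiv.ofBijective_apply, σ, hmod]
  exact ((hc.periodic hk).sub_int_mul_eq _).symm

end WindowInjective

/-- A proper 4-coloring of ℤ in which no two layers with the same color are at
distance 2 or 3 must be the cyclic coloring abcdabcd...: it is periodic of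
period 4 and, up to a permutation of colors, c(n) ≡ n (mod 4). -/
theorem coloring_period_four_unique
    (c : ℤ → ZMod 4)
    (h1 : ∀ n, c n ≠ c (n + 1))
    (h2 : ∀ n, c n ≠ c (n + 2) ∧ c n ≠ c (n - 2) ∧ c n ≠ c (n + 3) ∧ c n ≠ c (n - 3)) :
    (∀ n, c (n + 4) = c n) ∧
    ∃ σ : Equiv.Perm (ZMod 4), ∀ n : ℤ, c n = σ (n : ZMod 4) := by
  have hc : WindowInjective 4 c := by
    intro m n hmn hnm
    obtain rfl | rfl | rfl : n = m + 1 ∨ n = m + 2 ∨ n = m + 3 := by omega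
    exacts [h1 m, (h2 m).1, (h2 m).2.2.1]
  exact ⟨hc.periodic (ZMod.card 4), hc.exists_equiv_zmod (ZMod.card 4)⟩
end

section
/- Consider the triangular lattice A2 = {m·(1,0) + n·(1/2, √3/2) : m, n ∈ Z} (minimal distance 1). A coloring c: A2 → {1,2,3,4} assigns different colors to points at distance 1. Suppose additionally that no two points at distance √3 receive the same color. Then such a coloring exists, and it is unique up to a permutation of the four colors and up to the symmetry exchanging the two sublattice-pattern choices; explicitly, in coordinates (m,n), one valid coloring is c(m,n) determined by (m mod 2, n mod 2) via a bijection with the four colors. -/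
/-- The norm form of the triangular lattice A2 in coordinates (m,n):
the squared Euclidean distance between lattice points with coordinate
difference (m,n) is m² + mn + n². -/
def A2norm : ℤ × ℤ → ℤ := fun p => p.1 ^ 2 + p.1 * p.2 + p.2 ^ 2

/-- The E6 coloring of A2, determined by (m mod 2, n mod 2). -/
def e6Coloring : ℤ × ℤ → Fin 4 :=
  fun p => ⟨(p.1 % 2 + 2 * (p.2 % 2)).toNat, by omega⟩

/-! A coloring with distinct colors at distances 1 and √3 is rainbow on every fundamental
parallelogram `x + {0,1}²` of the lattice `2 ℤ²`. In such a parallelogram the point `x + (2,0)` is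
at distance 1 or √3 from the three vertices other than `x`, so with only four colors it has the
color of `x`; by the symmetry `(m,n) ↦ (n,m)` of A2 the same holds for `x + (0,2)`. Hence the
coloring is `2 ℤ²`-periodic and is a relabelling of `e6Coloring`, which in turn is proper because
the norm of a vector in `2 ℤ²` is divisible by 4. -/

def SeparatesNorm {α : Type*} (c : ℤ × ℤ → α) (d : ℤ) : Prop :=
  ∀ x y : ℤ × ℤ, A2norm (x - y) = d → c x ≠ c y

lemma A2norm_swap (p : ℤ × ℤ) : A2norm p.swap = A2norm p := by
  simp only [A2norm, Prod.fst_swap, Prod.snd_swap]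
  ring

lemma four_dvd_A2norm_of_two_dvd {p : ℤ × ℤ} (h₁ : 2 ∣ p.1) (h₂ : 2 ∣ p.2) : 4 ∣ A2norm p := by
  obtain ⟨s, hs⟩ := h₁
  obtain ⟨t, ht⟩ := h₂
  exact ⟨s ^ 2 + s * t + t ^ 2, by simp only [A2norm, hs, ht]; ring⟩

lemma e6Coloring_separatesNorm {d : ℤ} (hd : ¬ 4 ∣ d) : SeparatesNorm e6Coloring d := by
  rintro x y rfl hxy
  simp only [e6Coloring, Fin.mk.injEq] at hxy
  exact hd (four_dvd_A2norm_of_two_dvd (by simp only [Prod.fst_sub]; omega)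
    (by simp only [Prod.snd_sub]; omega))

namespace SeparatesNorm

variable {α : Type*} {c : ℤ × ℤ → α} {d : ℤ}

lemma comp_swap (h : SeparatesNorm c d) : SeparatesNorm (c ∘ Prod.swap) d := fun x y hxy =>
  h x.swap y.swap (by rw [← Prod.swap_sub, A2norm_swap, hxy])

lemma ne_add (h : SeparatesNorm c d) (x : ℤ × ℤ) {a b : ℤ × ℤ} (hab : A2norm (a - b) = d) :
    c (x + a) ≠ c (x + b) :=
  h _ _ (by rwa [add_sub_add_left_eq_sub])

end SeparatesNorm

def cellVertex (i : Fin 4) : ℤ × ℤ := ((i : ℤ) % 2, (i : ℤ) / 2)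

lemma cellVertex_e6Coloring (x : ℤ × ℤ) : cellVertex (e6Coloring x) = (x.1 % 2, x.2 % 2) := by
  simp only [cellVertex, e6Coloring, Prod.mk.injEq]
  omega

lemma A2norm_cellVertex_sub {i j : Fin 4} (hij : i ≠ j) :
    A2norm (cellVertex i - cellVertex j) = 1 ∨ A2norm (cellVertex i - cellVertex j) = 3 := by
  fin_cases i <;> fin_cases j <;> simp_all [cellVertex, A2norm]

lemma eq_of_ne_of_injective_fin_four {α : Type*} [Fintype α] (hα : Fintype.card α = 4)
    {f : Fin 4 → α} (hf : Function.Injective f) {u : α} (h₁ : u ≠ f 1) (h₂ : u ≠ f 2)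
    (h₃ : u ≠ f 3) : u = f 0 := by
  obtain ⟨i, rfl⟩ := ((Fintype.bijective_iff_injective_and_card f).2 ⟨hf, by simp [hα]⟩).2 u
  fin_cases i <;> simp_all

section ProperColoring

variable {α : Type*} {c : ℤ × ℤ → α}

lemma injective_cellVertex (h₁ : SeparatesNorm c 1) (h₃ : SeparatesNorm c 3) (x : ℤ × ℤ) :
    Function.Injective fun i => c (x + cellVertex i) := by
  intro i j hij
  by_contra hne
  rcases A2norm_cellVertex_sub hne with h | h
  exacts [h₁.ne_add x h hij, h₃.ne_add x h hij]

lemma periodic_fst [Fintype α] (hα : Fintype.card α = 4) (h₁ : SeparatesNorm c 1)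
    (h₃ : SeparatesNorm c 3) (n : ℤ) : Function.Periodic (fun m => c (m, n)) 2 := by
  intro m
  have key := eq_of_ne_of_injective_fin_four hα (injective_cellVertex h₁ h₃ (m, n))
    (h₁.ne_add (m, n) (a := (2, 0)) (by decide)) (h₃.ne_add (m, n) (a := (2, 0)) (by decide))
    (h₁.ne_add (m, n) (a := (2, 0)) (by decide))
  simpa [cellVertex] using key

lemma eq_emod_two [Fintype α] (hα : Fintype.card α = 4) (h₁ : SeparatesNorm c 1)
    (h₃ : SeparatesNorm c 3) (x : ℤ × ℤ) : c x = c (x.1 % 2, x.2 % 2) := by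
  calc c x = c (x.1 % 2, x.2) := by
        rw [Int.emod_def, mul_comm]
        exact ((periodic_fst hα h₁ h₃ x.2).sub_int_mul_eq (x.1 / 2)).symm
    _ = c (x.1 % 2, x.2 % 2) := by
        rw [Int.emod_def x.2, mul_comm]
        exact ((periodic_fst hα h₁.comp_swap h₃.comp_swap (x.1 % 2)).sub_int_mul_eq (x.2 / 2)).symm

end ProperColoring

/-- There is a 4-coloring of the triangular lattice A2 in which points at
distance 1 get distinct colors and points at distance √3 get distinct colors,
namely the coloring determined by (m mod 2, n mod 2); and it is unique up to a
permutation of the four colors and the symmetry exchanging the two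
sublattice-pattern choices. -/
theorem e6_coloring_exists_unique :
    ((∀ x y : ℤ × ℤ, A2norm (x - y) = 1 → e6Coloring x ≠ e6Coloring y) ∧
     (∀ x y : ℤ × ℤ, A2norm (x - y) = 3 → e6Coloring x ≠ e6Coloring y)) ∧
    ∀ c : ℤ × ℤ → Fin 4,
      (∀ x y : ℤ × ℤ, A2norm (x - y) = 1 → c x ≠ c y) →
      (∀ x y : ℤ × ℤ, A2norm (x - y) = 3 → c x ≠ c y) →
      ∃ σ : Equiv.Perm (Fin 4),
        (∀ x : ℤ × ℤ, c x = σ (e6Coloring x)) ∨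
        (∀ x : ℤ × ℤ, c x = σ (e6Coloring (x.2, x.1))) := by
  refine ⟨⟨e6Coloring_separatesNorm (by decide), e6Coloring_separatesNorm (by decide)⟩, ?_⟩
  intro c h₁ h₃
  have hcell : Function.Injective fun i => c (cellVertex i) := by
    simpa using injective_cellVertex h₁ h₃ 0
  refine ⟨Equiv.ofBijective _ hcell.bijective_of_finite, Or.inl fun x => ?_⟩
  rw [Equiv.ofBijective_apply, cellVertex_e6Coloring]
  exact eq_emod_two (Fintype.card_fin 4) h₁ h₃ x
end

section
/- Let c: A2 → {1,2,3,4} be a proper coloring of the triangular lattice (points at distance 1 get distinct colors). If c has no monochromatic pair at distance √3, then for any point x colored a, the six neighbors of x at distance 1 are colored in cyclic order b,c,d,b,c,d for some labeling {b,c,d} = {1,2,3,4}∖{a}. -/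
/-- The six neighbors of the origin in A2, in cyclic (hexagonal) order. -/
def hexNbr : Fin 6 → ℤ × ℤ := ![(1, 0), (0, 1), (-1, 1), (-1, 0), (0, -1), (1, -1)]

/-!
Around `x`, the neighbours `i`, `i+1`, `i+2` are pairwise at distance `1` or `√3` and all at
distance `1` from `x`, so together with `x` they carry all four colours. Neighbour `i+3` is at
distance `1` from `x` and from neighbour `i+2`, and at distance `√3` from neighbour `i+1`, so the
only colour left for it is that of neighbour `i`.
-/

theorem eq_of_ne_of_card_eq_four {α : Type*} [Fintype α] (hα : Fintype.card α = 4)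
    {p q r s t : α} (hpq : p ≠ q) (hpr : p ≠ r) (hps : p ≠ s) (hqr : q ≠ r) (hqs : q ≠ s)
    (hrs : r ≠ s) (htp : t ≠ p) (htq : t ≠ q) (htr : t ≠ r) : t = s := by
  classical
  have hcard : ({p, q, r, s} : Finset α).card = Fintype.card α := by
    rw [hα, Finset.card_insert_of_notMem (by simp [hpq, hpr, hps]),
      Finset.card_insert_of_notMem (by simp [hqr, hqs]), Finset.card_pair hrs]
  have ht : t ∈ ({p, q, r, s} : Finset α) := Finset.eq_univ_of_card _ hcard ▸ Finset.mem_univ t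
  simpa [htp, htq, htr] using ht

theorem A2norm_hexNbr (j : Fin 6) : A2norm (hexNbr j) = 1 := by
  revert j; decide

theorem A2norm_hexNbr_succ_sub (j : Fin 6) : A2norm (hexNbr (j + 1) - hexNbr j) = 1 := by
  revert j; decide

theorem A2norm_hexNbr_add_two_sub (j : Fin 6) : A2norm (hexNbr (j + 2) - hexNbr j) = 3 := by
  revert j; decide

section Coloring

variable {κ : Type*} {c : ℤ × ℤ → κ}

theorem color_nbr_ne_center (h1 : ∀ x y : ℤ × ℤ, A2norm (x - y) = 1 → c x ≠ c y)
    (x : ℤ × ℤ) (j : Fin 6) : c (x + hexNbr j) ≠ c x :=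
  h1 _ _ (by rw [add_sub_cancel_left, A2norm_hexNbr])

theorem color_nbr_succ_ne (h1 : ∀ x y : ℤ × ℤ, A2norm (x - y) = 1 → c x ≠ c y)
    (x : ℤ × ℤ) (j : Fin 6) : c (x + hexNbr (j + 1)) ≠ c (x + hexNbr j) :=
  h1 _ _ (by rw [add_sub_add_left_eq_sub, A2norm_hexNbr_succ_sub])

theorem color_nbr_add_two_ne (h3 : ∀ x y : ℤ × ℤ, A2norm (x - y) = 3 → c x ≠ c y)
    (x : ℤ × ℤ) (j : Fin 6) : c (x + hexNbr (j + 2)) ≠ c (x + hexNbr j) :=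
  h3 _ _ (by rw [add_sub_add_left_eq_sub, A2norm_hexNbr_add_two_sub])

end Coloring

/-- If a proper 4-coloring of A2 has no monochromatic pair at distance √3, then
around any point colored a, the six neighbors at distance 1 are colored in
cyclic order b,c,d,b,c,d with {b,c,d} the three colors other than a. -/
theorem e6_coloring_local_hexagon
    (c : ℤ × ℤ → Fin 4)
    (h1 : ∀ x y : ℤ × ℤ, A2norm (x - y) = 1 → c x ≠ c y)
    (h3 : ∀ x y : ℤ × ℤ, A2norm (x - y) = 3 → c x ≠ c y) :
    ∀ x : ℤ × ℤ, ∀ i : Fin 6,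
      c (x + hexNbr i) ≠ c x ∧
      c (x + hexNbr (i + 3)) = c (x + hexNbr i) ∧
      c (x + hexNbr (i + 1)) ≠ c (x + hexNbr i) ∧
      c (x + hexNbr (i + 2)) ≠ c (x + hexNbr i) := by
  intro x i
  have center := color_nbr_ne_center h1 x
  have adj := color_nbr_succ_ne h1 x
  have skip := color_nbr_add_two_ne h3 x
  have h12 : c (x + hexNbr (i + 2)) ≠ c (x + hexNbr (i + 1)) := by
    simpa only [add_assoc, show (1 : Fin 6) + 1 = 2 from rfl] using adj (i + 1)
  have h23 : c (x + hexNbr (i + 3)) ≠ c (x + hexNbr (i + 2)) := by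
    simpa only [add_assoc, show (2 : Fin 6) + 1 = 3 from rfl] using adj (i + 2)
  have h13 : c (x + hexNbr (i + 3)) ≠ c (x + hexNbr (i + 1)) := by
    simpa only [add_assoc, show (1 : Fin 6) + 2 = 3 from rfl] using skip (i + 1)
  refine ⟨center i, ?_, adj i, skip i⟩
  exact eq_of_ne_of_card_eq_four (Fintype.card_fin 4) (center (i + 1)).symm (center (i + 2)).symm
    (center i).symm h12.symm (adj i) (skip i) (center (i + 3)) h13 h23
end
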